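/- arXiv:1808.04644 — 3 statements merged into one kernel-verified Lean document; each statement's English description precedes it below -/
import Mathlib

section
/- For every Riemannian manifold (M^n, g) of dimension n ≥ 3 and every λ ∈ ℝ, the pointwise estimate |−W_{ijkl} R̊_{jl} R̊_{ik} + λ R̊_{ij} R̊_{jk} R̊_{ki}| ≤ √((n−2)/(2(n−1))) · (|W|² + (2(n−2)λ²/n) |R̊|²)^{1/2} · |R̊|² = √((n−2)/(2(n−1))) · |W + (λ/√(2n)) R̊ ∘∧ g| · |R̊|² holds. -/
open MeasureTheory

noncomputable section

/-- Kronecker delta (the metric in an orthonormal frame). -/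
def kdelta {n : ℕ} (i j : Fin n) : ℝ := if i = j then 1 else 0

/-- Pointwise curvature data of a Riemannian `n`-manifold `M`, expressed as components with
respect to orthonormal frames.  `Rm` are the components `R_{ijkl}` of the Riemann curvature
tensor, `dRic x i j k = R_{jk,i}` is the covariant derivative of the Ricci tensor,
`hessR x i j = R_{,ij}` is the Hessian of the scalar curvature, `lapTRic x i j = Δ R̊_{ij}` is
the rough Laplacian of the traceless Ricci tensor, `lapNormSqTRic x = Δ |R̊|²`, and
`dC x l i j k = C_{ijk,l}` is the covariant derivative of the Cotton tensor.  The axioms record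
the symmetries of the curvature tensor, the symmetry of `∇Ric` and of the Hessian, and the
contracted second Bianchi identity `R_{ik,i} = R_{,k}/2`. -/
structure GeomData (n : ℕ) (M : Type) where
  Rm : M → Fin n → Fin n → Fin n → Fin n → ℝ
  dRic : M → Fin n → Fin n → Fin n → ℝ
  hessR : M → Fin n → Fin n → ℝ
  lapTRic : M → Fin n → Fin n → ℝ
  lapNormSqTRic : M → ℝ
  dC : M → Fin n → Fin n → Fin n → Fin n → ℝ
  rm_antisymm₁ : ∀ x i j k l, Rm x j i k l = - Rm x i j k l
  rm_antisymm₂ : ∀ x i j k l, Rm x i j l k = - Rm x i j k l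
  rm_pair : ∀ x i j k l, Rm x k l i j = Rm x i j k l
  rm_bianchi : ∀ x i j k l, Rm x i j k l + Rm x j k i l + Rm x k i j l = 0
  dRic_symm : ∀ x i j k, dRic x i k j = dRic x i j k
  hessR_symm : ∀ x i j, hessR x j i = hessR x i j
  bianchi2 : ∀ x k, ∑ i : Fin n, dRic x i i k = (∑ j : Fin n, dRic x k j j) / 2

namespace GeomData

variable {n : ℕ} {M : Type} (D : GeomData n M)

/-- Ricci curvature `R_{jk} = R_{ijik}`. -/
def Ric (x : M) (j k : Fin n) : ℝ := ∑ i : Fin n, D.Rm x i j i k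

/-- Scalar curvature `R`. -/
def R (x : M) : ℝ := ∑ j : Fin n, D.Ric x j j

/-- Traceless Ricci tensor `R̊_{jk} = R_{jk} - (R/n) g_{jk}`. -/
def TRic (x : M) (j k : Fin n) : ℝ := D.Ric x j k - D.R x / (n : ℝ) * kdelta j k

/-- Gradient of the scalar curvature `R_{,i}`. -/
def dR (x : M) (i : Fin n) : ℝ := ∑ j : Fin n, D.dRic x i j j

/-- Covariant derivative of the traceless Ricci tensor `R̊_{jk,i}`. -/
def dTRic (x : M) (i j k : Fin n) : ℝ := D.dRic x i j k - D.dR x i / (n : ℝ) * kdelta j k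

/-- Laplacian of the scalar curvature `ΔR`. -/
def lapR (x : M) : ℝ := ∑ i : Fin n, D.hessR x i i

/-- Weyl curvature tensor `W_{ijkl}`. -/
def W (x : M) (i j k l : Fin n) : ℝ :=
  D.Rm x i j k l
    - (1 / ((n : ℝ) - 2)) * (D.Ric x i k * kdelta j l - D.Ric x i l * kdelta j k
        + D.Ric x j l * kdelta i k - D.Ric x j k * kdelta i l)
    + D.R x / (((n : ℝ) - 1) * ((n : ℝ) - 2)) *
        (kdelta i k * kdelta j l - kdelta i l * kdelta j k)

/-- Cotton tensor `C_{ijk} = R_{kj,i} - R_{ki,j} - (R_{,i} g_{jk} - R_{,j} g_{ik})/(2(n-1))`. -/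
def C (x : M) (i j k : Fin n) : ℝ :=
  D.dRic x i k j - D.dRic x j k i
    - (1 / (2 * ((n : ℝ) - 1))) * (D.dR x i * kdelta j k - D.dR x j * kdelta i k)

/-- Divergence of the Cotton tensor `C_{ijk,i}`. -/
def divC (x : M) (j k : Fin n) : ℝ := ∑ i : Fin n, D.dC x i i j k

/-- `|Ric|²`. -/
def normSqRic (x : M) : ℝ := ∑ j : Fin n, ∑ k : Fin n, (D.Ric x j k) ^ 2

/-- `|R̊|²`. -/
def normSqTRic (x : M) : ℝ := ∑ j : Fin n, ∑ k : Fin n, (D.TRic x j k) ^ 2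

/-- `|R̊|`. -/
def normTRic (x : M) : ℝ := Real.sqrt (D.normSqTRic x)

/-- `|Rm|²`. -/
def normSqRm (x : M) : ℝ :=
  ∑ i : Fin n, ∑ j : Fin n, ∑ k : Fin n, ∑ l : Fin n, (D.Rm x i j k l) ^ 2

/-- `|W|²`. -/
def normSqW (x : M) : ℝ :=
  ∑ i : Fin n, ∑ j : Fin n, ∑ k : Fin n, ∑ l : Fin n, (D.W x i j k l) ^ 2

/-- `|C|²`. -/
def normSqC (x : M) : ℝ := ∑ i : Fin n, ∑ j : Fin n, ∑ k : Fin n, (D.C x i j k) ^ 2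

/-- `|∇R|²`. -/
def normSqGradR (x : M) : ℝ := ∑ i : Fin n, (D.dR x i) ^ 2

/-- `|∇R̊|²`. -/
def normSqGradTRic (x : M) : ℝ :=
  ∑ i : Fin n, ∑ j : Fin n, ∑ k : Fin n, (D.dTRic x i j k) ^ 2

/-- The quantity `|W + (λ/√(2n)) R̊ ⊙∧ g|` (Kulkarni–Nomizu product with the metric),
characterized by `|W + (λ/√(2n)) R̊ ⊙∧ g|² = |W|² + (2(n-2)λ²/n)|R̊|²`. -/
def WKN (lam : ℝ) (x : M) : ℝ :=
  Real.sqrt (D.normSqW x + 2 * ((n : ℝ) - 2) * lam ^ 2 / (n : ℝ) * D.normSqTRic x)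

/-- The contraction `W_{ijkl} R̊_{jl} R̊_{ik}`. -/
def cWTT (x : M) : ℝ :=
  ∑ i : Fin n, ∑ j : Fin n, ∑ k : Fin n, ∑ l : Fin n,
    D.W x i j k l * D.TRic x j l * D.TRic x i k

/-- The contraction `W_{ikjl} R̊_{kl} R̊_{ij}`. -/
def cWTT' (x : M) : ℝ :=
  ∑ i : Fin n, ∑ j : Fin n, ∑ k : Fin n, ∑ l : Fin n,
    D.W x i k j l * D.TRic x k l * D.TRic x i j

/-- The contraction `W_{ikpq} W_{jkpq} R̊_{ij}`. -/
def cWWT (x : M) : ℝ :=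
  ∑ i : Fin n, ∑ j : Fin n, ∑ k : Fin n, ∑ p : Fin n, ∑ q : Fin n,
    D.W x i k p q * D.W x j k p q * D.TRic x i j

/-- The contraction `R̊_{ij} R̊_{jk} R̊_{ki}`. -/
def cTTT (x : M) : ℝ :=
  ∑ i : Fin n, ∑ j : Fin n, ∑ k : Fin n, D.TRic x i j * D.TRic x j k * D.TRic x k i

/-- `g` is a critical metric for `F_{t,s}(g) = ∫|Ric|² + t∫R² + s∫|Rm|²` on the space of
unit-volume metrics: the Euler–Lagrange equations (Catino), where `μ` is the Riemannian
volume measure. -/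
def IsCritical [MeasurableSpace M] (μ : Measure M) (t s : ℝ) : Prop :=
  (∀ x i j, (1 + 4 * s) * D.lapTRic x i j =
      (1 + 2 * t + 2 * s) * D.hessR x i j
      - ((1 + 2 * t + 2 * s) / (n : ℝ)) * D.lapR x * kdelta i j
      - 2 * (1 + 2 * s) * (∑ k : Fin n, ∑ l : Fin n, D.Rm x i k j l * D.TRic x k l)
      - ((2 + 2 * (n : ℝ) * t - 4 * s) / (n : ℝ)) * D.R x * D.TRic x i j
      + (2 / (n : ℝ)) * (D.normSqTRic x + s * D.normSqRm x) * kdelta i j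
      - 2 * s * (∑ k : Fin n, ∑ p : Fin n, ∑ q : Fin n, D.Rm x i k p q * D.Rm x j k p q)
      + 4 * s * (∑ k : Fin n, D.TRic x i k * D.TRic x j k))
  ∧ (∀ x, ((n : ℝ) + 4 * ((n : ℝ) - 1) * t + 4 * s) * D.lapR x =
      ((n : ℝ) - 4) * (D.normSqRic x + t * (D.R x) ^ 2 + s * D.normSqRm x
        - ∫ y, (D.normSqRic y + t * (D.R y) ^ 2 + s * D.normSqRm y) ∂μ))

/-- The metric is Einstein: the traceless Ricci tensor vanishes. -/
def IsEinstein : Prop := ∀ x i j, D.TRic x i j = 0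

/-- The metric has positive constant sectional curvature. -/
def HasConstPosSecCurv : Prop :=
  ∃ κ : ℝ, 0 < κ ∧ ∀ x i j k l,
    D.Rm x i j k l = κ * (kdelta i k * kdelta j l - kdelta i l * kdelta j k)

end GeomData

end

/-!
Write `S = R̊`. Since `W` is totally trace-free, pairing it with the Kulkarni–Nomizu square
`S ⊙ S` only sees the Weyl part `E` of `S ⊙ S`, and `W_{ijkl} R̊_{jl} R̊_{ik} = ⟨W, E⟩ / 4`, so
`|W_{ijkl} R̊_{jl} R̊_{ik}| ≤ |W| |E| / 4`. Cauchy–Schwarz between `S` and the trace-free part of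
`S²` gives `n (tr S³)² ≤ |S|² (n |S²|² - |S|⁴)`. The two estimates fit together because of the
identity `|E|² / 16 + (n |S²|² - |S|⁴) / (2(n-2)) = (n-2)/(2(n-1)) |S|⁴`, and a last
Cauchy–Schwarz inequality in `ℝ²` combines them.
-/

open Finset

noncomputable section

namespace AlgebraicCurvature

variable {n : ℕ}

abbrev Tensor4 (n : ℕ) := Fin n → Fin n → Fin n → Fin n → ℝ

lemma cast_sub_two_pos (hn : 3 ≤ n) : (0 : ℝ) < n - 2 := by
  have : (3 : ℝ) ≤ n := by exact_mod_cast hn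
  linarith

def kulkarniNomizu (a b : Matrix (Fin n) (Fin n) ℝ) : Tensor4 n :=
  fun i j k l => a i k * b j l + a j l * b i k - a i l * b j k - a j k * b i l

def ricciContraction : Tensor4 n →ₗ[ℝ] Matrix (Fin n) (Fin n) ℝ where
  toFun A := Matrix.of fun j l => ∑ i, A i j i l
  map_add' A B := by ext; simp [sum_add_distrib]
  map_smul' c A := by ext; simp [mul_sum]

lemma ricciContraction_apply (A : Tensor4 n) (j l : Fin n) :
    ricciContraction A j l = ∑ i, A i j i l := rfl

def tensorDot : Tensor4 n →ₗ[ℝ] Tensor4 n →ₗ[ℝ] ℝ :=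
  LinearMap.mk₂ ℝ (fun A B => ∑ i, ∑ j, ∑ k, ∑ l, A i j k l * B i j k l)
    (fun _ _ _ => by simp [add_mul, sum_add_distrib])
    (fun _ _ _ => by simp [mul_sum, mul_assoc])
    (fun _ _ _ => by simp [mul_add, sum_add_distrib])
    (fun _ _ _ => by simp [mul_sum, mul_left_comm])

lemma tensorDot_apply (A B : Tensor4 n) :
    tensorDot A B = ∑ i, ∑ j, ∑ k, ∑ l, A i j k l * B i j k l := rfl

lemma tensorDot_comm (A B : Tensor4 n) : tensorDot A B = tensorDot B A := by
  simp only [tensorDot_apply, mul_comm]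

lemma tensorDot_self (A : Tensor4 n) : tensorDot A A = ∑ i, ∑ j, ∑ k, ∑ l, A i j k l ^ 2 := by
  simp only [tensorDot_apply, sq]

lemma tensorDot_self_nonneg (A : Tensor4 n) : 0 ≤ tensorDot A A := by
  rw [tensorDot_self]
  exact sum_nonneg fun _ _ => sum_nonneg fun _ _ => sum_nonneg fun _ _ => sum_nonneg fun _ _ =>
    sq_nonneg _

lemma sq_tensorDot_le (A B : Tensor4 n) :
    tensorDot A B ^ 2 ≤ tensorDot A A * tensorDot B B := by
  have := sum_mul_sq_le_sq_mul_sq (univ : Finset (Fin n × Fin n × Fin n × Fin n))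
    (fun p => A p.1 p.2.1 p.2.2.1 p.2.2.2) (fun p => B p.1 p.2.1 p.2.2.1 p.2.2.2)
  simpa [tensorDot_apply, Fintype.sum_prod_type, sq] using this

lemma sum_swap_left (f : Tensor4 n) :
    ∑ i, ∑ j, ∑ k, ∑ l, f j i k l = ∑ i, ∑ j, ∑ k, ∑ l, f i j k l :=
  sum_comm

lemma sum_swap_right (f : Tensor4 n) :
    ∑ i, ∑ j, ∑ k, ∑ l, f i j l k = ∑ i, ∑ j, ∑ k, ∑ l, f i j k l :=
  sum_congr rfl fun _ _ => sum_congr rfl fun _ _ => sum_comm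

lemma sum_congr₄ {f g : Tensor4 n} (h : ∀ i j k l, f i j k l = g i j k l) :
    ∑ i, ∑ j, ∑ k, ∑ l, f i j k l = ∑ i, ∑ j, ∑ k, ∑ l, g i j k l := by
  simp only [h]

structure IsBiSkew (A : Tensor4 n) : Prop where
  swap_left : ∀ i j k l, A j i k l = -A i j k l
  swap_right : ∀ i j k l, A i j l k = -A i j k l

lemma isBiSkew_kulkarniNomizu (a b : Matrix (Fin n) (Fin n) ℝ) :
    IsBiSkew (kulkarniNomizu a b) :=
  ⟨fun _ _ _ _ => by simp only [kulkarniNomizu]; ring,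
    fun _ _ _ _ => by simp only [kulkarniNomizu]; ring⟩

lemma ricciContraction_kulkarniNomizu_one (a : Matrix (Fin n) (Fin n) ℝ) :
    ricciContraction (kulkarniNomizu a 1) = ((n : ℝ) - 2) • a + a.trace • 1 := by
  ext j l
  simp [ricciContraction_apply, kulkarniNomizu, Matrix.one_apply, sum_add_distrib, Matrix.trace,
    mul_ite]
  ring

lemma ricciContraction_kulkarniNomizu_self (a : Matrix (Fin n) (Fin n) ℝ) :
    ricciContraction (kulkarniNomizu a a) = (2 * a.trace) • a - (2 : ℝ) • (a * a) := by
  ext j l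
  simp [ricciContraction_apply, kulkarniNomizu, Matrix.mul_apply, sum_add_distrib, Matrix.trace]
  rw [← sum_mul, ← mul_sum]
  simp_rw [mul_comm (a _ l) (a j _)]
  ring

lemma tensorDot_kulkarniNomizu {A : Tensor4 n} (hA : IsBiSkew A)
    (a b : Matrix (Fin n) (Fin n) ℝ) :
    tensorDot A (kulkarniNomizu a b) = 4 * ∑ i, ∑ j, ∑ k, ∑ l, A i j k l * a i k * b j l := by
  -- after relabelling indices, each of the four terms of `a ⊙ b` contributes the same sum
  set T := ∑ i, ∑ j, ∑ k, ∑ l, A i j k l * a i k * b j l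
  have h₁ : ∑ i, ∑ j, ∑ k, ∑ l, A i j k l * (a i k * b j l) = T :=
    sum_congr₄ fun i j k l => by ring
  have h₂ : ∑ i, ∑ j, ∑ k, ∑ l, A i j k l * (a j l * b i k) = T := by
    refine ((sum_swap_left _).symm.trans (sum_swap_right _).symm).trans
      (sum_congr₄ fun i j k l => ?_)
    rw [hA.swap_left, hA.swap_right]; ring
  have h₃ : -∑ i, ∑ j, ∑ k, ∑ l, A i j k l * (a i l * b j k) = T := by
    simp only [← sum_neg_distrib]
    refine (sum_swap_right _).symm.trans (sum_congr₄ fun i j k l => ?_)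
    rw [hA.swap_right]; ring
  have h₄ : -∑ i, ∑ j, ∑ k, ∑ l, A i j k l * (a j k * b i l) = T := by
    simp only [← sum_neg_distrib]
    refine (sum_swap_left _).symm.trans (sum_congr₄ fun i j k l => ?_)
    rw [hA.swap_left]; ring
  simp only [tensorDot_apply, kulkarniNomizu, mul_add, mul_sub, sum_add_distrib, sum_sub_distrib,
    h₁, h₂]
  linarith

lemma tensorDot_kulkarniNomizu_one {A : Tensor4 n} (hA : IsBiSkew A)
    (a : Matrix (Fin n) (Fin n) ℝ) :
    tensorDot A (kulkarniNomizu a 1) = 4 * ∑ i, ∑ k, a i k * ricciContraction A i k := by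
  rw [tensorDot_kulkarniNomizu hA]
  congr 1
  refine sum_congr rfl fun i _ => ?_
  rw [sum_comm]
  refine sum_congr rfl fun k _ => ?_
  simp only [ricciContraction_apply, Matrix.one_apply, mul_ite, mul_one, mul_zero, sum_ite_eq,
    mem_univ, if_true, mul_sum]
  refine sum_congr rfl fun j _ => ?_
  rw [hA.swap_left, hA.swap_right]; ring

def frobeniusSq (a : Matrix (Fin n) (Fin n) ℝ) : ℝ := ∑ i, ∑ j, a i j ^ 2

lemma trace_mul_self_of_isSymm {a : Matrix (Fin n) (Fin n) ℝ} (ha : a.IsSymm) :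
    (a * a).trace = frobeniusSq a := by
  simp only [Matrix.trace, Matrix.diag, Matrix.mul_apply, frobeniusSq, sq]
  refine sum_congr rfl fun i _ => sum_congr rfl fun j _ => ?_
  rw [ha.apply i j]

lemma tensorDot_kulkarniNomizu_self_self {a : Matrix (Fin n) (Fin n) ℝ} (ha : a.IsSymm) :
    tensorDot (kulkarniNomizu a a) (kulkarniNomizu a a) =
      8 * frobeniusSq a ^ 2 - 8 * frobeniusSq (a * a) := by
  have hsq : ∑ i, ∑ j, ∑ k, ∑ l, a i k ^ 2 * a j l ^ 2 = frobeniusSq a ^ 2 := by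
    simp only [frobeniusSq, sq (∑ i, _), sum_mul_sum]
  have hquartic :
      ∑ i, ∑ j, ∑ k, ∑ l, (a i k * a j k) * (a i l * a j l) = frobeniusSq (a * a) := by
    simp only [frobeniusSq, sq, Matrix.mul_apply, sum_mul_sum]
    refine sum_congr₄ fun i j k l => ?_
    rw [← ha.apply j k, ← ha.apply j l]
  rw [tensorDot_kulkarniNomizu (isBiSkew_kulkarniNomizu a a), ← hsq, ← hquartic]
  simp only [mul_sum, ← sum_sub_distrib]
  exact sum_congr₄ fun i j k l => by simp only [kulkarniNomizu]; ring

def weylPartOfSq (a : Matrix (Fin n) (Fin n) ℝ) : Tensor4 n :=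
  kulkarniNomizu a a + (2 / ((n : ℝ) - 2)) • kulkarniNomizu (a * a) 1
    - ((a * a).trace / (((n : ℝ) - 1) * ((n : ℝ) - 2))) • kulkarniNomizu 1 1

lemma isBiSkew_weylPartOfSq (a : Matrix (Fin n) (Fin n) ℝ) : IsBiSkew (weylPartOfSq a) :=
  ⟨fun _ _ _ _ => by simp only [weylPartOfSq, kulkarniNomizu, Pi.add_apply, Pi.sub_apply,
      Pi.smul_apply, smul_eq_mul]; ring,
    fun _ _ _ _ => by simp only [weylPartOfSq, kulkarniNomizu, Pi.add_apply, Pi.sub_apply,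
      Pi.smul_apply, smul_eq_mul]; ring⟩

lemma ricciContraction_weylPartOfSq (hn : 3 ≤ n) {a : Matrix (Fin n) (Fin n) ℝ}
    (ha : a.trace = 0) : ricciContraction (weylPartOfSq a) = 0 := by
  have hn₂ := cast_sub_two_pos hn
  have hn₁ : (0 : ℝ) < n - 1 := by linarith
  ext j l
  simp only [weylPartOfSq, map_add, map_sub, map_smul, ricciContraction_kulkarniNomizu_self,
    ricciContraction_kulkarniNomizu_one, ha, Matrix.trace_one, Fintype.card_fin]
  simp only [mul_one, Matrix.sub_apply, Matrix.add_apply, Matrix.smul_apply, smul_eq_mul,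
    Matrix.one_apply, Matrix.zero_apply]
  split_ifs <;> field_simp <;> ring

lemma tensorDot_weylPartOfSq {A : Tensor4 n} (hA : IsBiSkew A) (hc : ricciContraction A = 0)
    (a : Matrix (Fin n) (Fin n) ℝ) :
    tensorDot A (weylPartOfSq a) = tensorDot A (kulkarniNomizu a a) := by
  simp [weylPartOfSq, tensorDot_kulkarniNomizu_one hA, hc]

lemma tensorDot_weylPartOfSq_self (hn : 3 ≤ n) {a : Matrix (Fin n) (Fin n) ℝ} (ha : a.IsSymm)
    (h0 : a.trace = 0) :
    tensorDot (weylPartOfSq a) (weylPartOfSq a) =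
      8 * (((n : ℝ) - 2) / ((n : ℝ) - 1)) * frobeniusSq a ^ 2
        - 8 * ((n : ℝ) * frobeniusSq (a * a) - frobeniusSq a ^ 2) / ((n : ℝ) - 2) := by
  have hn₂ := cast_sub_two_pos hn
  have hn₁ : (0 : ℝ) < n - 1 := by linarith
  have hcontr : ricciContraction (kulkarniNomizu a a) = -((2 : ℝ) • (a * a)) := by
    rw [ricciContraction_kulkarniNomizu_self, h0, mul_zero, zero_smul, zero_sub]
  have hsq : ∑ i, ∑ k, (a * a) i k * ricciContraction (kulkarniNomizu a a) i k =
      -2 * frobeniusSq (a * a) := by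
    simp [hcontr, frobeniusSq, mul_sum, sq, mul_left_comm]
  have hone : ∑ i, ∑ k, (1 : Matrix (Fin n) (Fin n) ℝ) i k *
      ricciContraction (kulkarniNomizu a a) i k = -2 * frobeniusSq a := by
    rw [hcontr, ← trace_mul_self_of_isSymm ha]
    simp [Matrix.one_apply, Matrix.trace, mul_sum]
  rw [tensorDot_weylPartOfSq (isBiSkew_weylPartOfSq a) (ricciContraction_weylPartOfSq hn h0),
    tensorDot_comm]
  simp only [weylPartOfSq, map_add, map_sub, map_smul, smul_eq_mul,
    tensorDot_kulkarniNomizu_self_self ha,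
    tensorDot_kulkarniNomizu_one (isBiSkew_kulkarniNomizu a a), hsq, hone,
    trace_mul_self_of_isSymm ha]
  field_simp
  ring

lemma sq_sum_mul_le (a b : Matrix (Fin n) (Fin n) ℝ) :
    (∑ i, ∑ j, a i j * b i j) ^ 2 ≤ frobeniusSq a * frobeniusSq b := by
  have := sum_mul_sq_le_sq_mul_sq (univ : Finset (Fin n × Fin n))
    (fun p => a p.1 p.2) (fun p => b p.1 p.2)
  simpa [frobeniusSq, Fintype.sum_prod_type] using this

lemma frobeniusSq_smul_sub_trace_smul_one (b : Matrix (Fin n) (Fin n) ℝ) :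
    frobeniusSq ((n : ℝ) • b - b.trace • 1) = n * ((n : ℝ) * frobeniusSq b - b.trace ^ 2) := by
  simp only [frobeniusSq, Matrix.trace, Matrix.diag]
  simp [Matrix.one_apply, sub_sq, mul_pow, sum_add_distrib, sum_sub_distrib, ← mul_sum, ite_pow,
    mul_ite]
  rw [← sum_mul, ← mul_sum, ← mul_sum]
  ring

lemma sum_mul_smul_sub_trace_smul_one (a b : Matrix (Fin n) (Fin n) ℝ) :
    ∑ i, ∑ k, a i k * ((n : ℝ) • b - b.trace • 1) i k =
      n * ∑ i, ∑ k, a i k * b i k - a.trace * b.trace := by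
  have hone : ∑ i, ∑ k, a i k * (1 : Matrix (Fin n) (Fin n) ℝ) i k = a.trace := by
    simp [Matrix.one_apply, Matrix.trace]
  simp only [Matrix.sub_apply, Matrix.smul_apply, smul_eq_mul, mul_sub, sum_sub_distrib,
    mul_left_comm (a _ _), ← mul_sum, hone]
  ring

lemma sq_trace_le_card_mul_frobeniusSq (hn : 0 < n) (b : Matrix (Fin n) (Fin n) ℝ) :
    b.trace ^ 2 ≤ n * frobeniusSq b := by
  have h := frobeniusSq_smul_sub_trace_smul_one b
  have : 0 ≤ frobeniusSq ((n : ℝ) • b - b.trace • 1) :=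
    sum_nonneg fun _ _ => sum_nonneg fun _ _ => sq_nonneg _
  have hn' : (0 : ℝ) < n := by exact_mod_cast hn
  nlinarith

lemma sum_mul_mul_self_apply {a : Matrix (Fin n) (Fin n) ℝ} (ha : a.IsSymm) :
    ∑ i, ∑ k, a i k * (a * a) i k = ∑ i, ∑ j, ∑ k, a i j * a j k * a k i := by
  simp only [Matrix.mul_apply, mul_sum]
  refine sum_congr rfl fun i _ => ?_
  rw [sum_comm]
  refine sum_congr rfl fun j _ => sum_congr rfl fun k _ => ?_
  rw [ha.apply i k]; ring

lemma card_mul_sq_sum_cube_le (hn : 0 < n) {a : Matrix (Fin n) (Fin n) ℝ} (ha : a.IsSymm)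
    (h0 : a.trace = 0) :
    n * (∑ i, ∑ j, ∑ k, a i j * a j k * a k i) ^ 2 ≤
      frobeniusSq a * ((n : ℝ) * frobeniusSq (a * a) - frobeniusSq a ^ 2) := by
  have h := sq_sum_mul_le a ((n : ℝ) • (a * a) - (a * a).trace • 1)
  rw [sum_mul_smul_sub_trace_smul_one, h0, zero_mul, sub_zero, sum_mul_mul_self_apply ha,
    frobeniusSq_smul_sub_trace_smul_one, trace_mul_self_of_isSymm ha] at h
  have hn' : (0 : ℝ) < n := by exact_mod_cast hn
  nlinarith

lemma abs_add_le_sqrt_mul_sqrt {u v a b c d : ℝ} (ha : 0 ≤ a) (hb : 0 ≤ b) (hc : 0 ≤ c)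
    (hd : 0 ≤ d) (hu : u ^ 2 ≤ a * c) (hv : v ^ 2 ≤ b * d) :
    |u + v| ≤ √(a + b) * √(c + d) := by
  rw [← Real.sqrt_mul (by positivity)]
  apply Real.abs_le_sqrt
  have h : (u * v) ^ 2 ≤ (a * d) * (b * c) := by
    rw [mul_pow]
    calc u ^ 2 * v ^ 2 ≤ (a * c) * (b * d) := by gcongr
      _ = (a * d) * (b * c) := by ring
  nlinarith [sq_nonneg (a * d - b * c), mul_nonneg ha hd, mul_nonneg hb hc]

lemma sq_sum_mul_mul_le {W : Tensor4 n} (hW : IsBiSkew W) (hWc : ricciContraction W = 0)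
    (S : Matrix (Fin n) (Fin n) ℝ) :
    (∑ i, ∑ j, ∑ k, ∑ l, W i j k l * S j l * S i k) ^ 2 ≤
      tensorDot W W * (tensorDot (weylPartOfSq S) (weylPartOfSq S) / 16) := by
  have h := sq_tensorDot_le W (weylPartOfSq S)
  rw [tensorDot_weylPartOfSq hW hWc, tensorDot_kulkarniNomizu hW,
    sum_congr₄ fun i j k l => mul_right_comm (W i j k l) (S i k) (S j l)] at h
  nlinarith

theorem abs_neg_sum_mul_add_mul_sum_cube_le (hn : 3 ≤ n) {W : Tensor4 n} (hW : IsBiSkew W)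
    (hWc : ricciContraction W = 0) {S : Matrix (Fin n) (Fin n) ℝ} (hS : S.IsSymm)
    (h0 : S.trace = 0) (lam : ℝ) :
    |-(∑ i, ∑ j, ∑ k, ∑ l, W i j k l * S j l * S i k)
        + lam * ∑ i, ∑ j, ∑ k, S i j * S j k * S k i| ≤
      √(((n : ℝ) - 2) / (2 * ((n : ℝ) - 1))) *
        √(tensorDot W W + 2 * ((n : ℝ) - 2) * lam ^ 2 / n * frobeniusSq S) * frobeniusSq S := by
  have hn₂ := cast_sub_two_pos hn
  have hweyl := sq_sum_mul_mul_le hW hWc S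
  have hE := tensorDot_weylPartOfSq_self hn hS h0
  have hcube := card_mul_sq_sum_cube_le (by omega) hS h0
  have hp₄ := sq_trace_le_card_mul_frobeniusSq (by omega) (S * S)
  rw [trace_mul_self_of_isSymm hS] at hp₄
  have hq : 0 ≤ frobeniusSq S := sum_nonneg fun _ _ => sum_nonneg fun _ _ => sq_nonneg _
  have hEn := tensorDot_self_nonneg (weylPartOfSq S)
  set E := tensorDot (weylPartOfSq S) (weylPartOfSq S)
  set p₃ := ∑ i, ∑ j, ∑ k, S i j * S j k * S k i
  set q := frobeniusSq S
  set p₄ := frobeniusSq (S * S)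
  have hK : E / 16 + ((n : ℝ) * p₄ - q ^ 2) / (2 * ((n : ℝ) - 2)) =
      ((n : ℝ) - 2) / (2 * ((n : ℝ) - 1)) * q ^ 2 := by
    rw [hE]; field_simp; ring
  calc _ ≤ √(tensorDot W W + 2 * ((n : ℝ) - 2) * lam ^ 2 / n * q) *
        √(E / 16 + ((n : ℝ) * p₄ - q ^ 2) / (2 * ((n : ℝ) - 2))) := by
        apply abs_add_le_sqrt_mul_sqrt (tensorDot_self_nonneg W)
        · positivity
        · positivity
        · exact div_nonneg (by linarith) (by linarith)
        · rwa [neg_sq]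
        · have hn₀ : (0 : ℝ) < n := by linarith
          calc (lam * p₃) ^ 2 = lam ^ 2 * (n * p₃ ^ 2) / n := by field_simp
            _ ≤ lam ^ 2 * (q * (n * p₄ - q ^ 2)) / n := by gcongr
            _ = _ := by field_simp
    _ = _ := by
      rw [hK, Real.sqrt_mul (div_nonneg hn₂.le (by linarith)), Real.sqrt_sq hq]; ring

end AlgebraicCurvature

namespace GeomData

open AlgebraicCurvature

variable {n : ℕ} {M : Type} (D : GeomData n M)

lemma kdelta_eq_one : (kdelta : Fin n → Fin n → ℝ) = (1 : Matrix (Fin n) (Fin n) ℝ) := by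
  ext i j
  simp [kdelta, Matrix.one_apply]

lemma W_eq (x : M) :
    D.W x = D.Rm x - (1 / ((n : ℝ) - 2)) • kulkarniNomizu (Matrix.of (D.Ric x)) 1
      + (D.R x / (((n : ℝ) - 1) * ((n : ℝ) - 2)) / 2) • kulkarniNomizu 1 1 := by
  ext i j k l
  simp only [W, kdelta_eq_one, kulkarniNomizu, Matrix.of_apply, Pi.add_apply, Pi.sub_apply,
    Pi.smul_apply, smul_eq_mul]
  ring

lemma isBiSkew_W (x : M) : IsBiSkew (D.W x) :=
  ⟨fun i j k l => by simp only [W]; rw [D.rm_antisymm₁]; ring,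
    fun i j k l => by simp only [W]; rw [D.rm_antisymm₂]; ring⟩

lemma ricciContraction_W (hn : 3 ≤ n) (x : M) : ricciContraction (D.W x) = 0 := by
  have hn₂ := cast_sub_two_pos hn
  have hn₁ : (0 : ℝ) < n - 1 := by linarith
  have hRm : ricciContraction (D.Rm x) = Matrix.of (D.Ric x) := rfl
  have htr : (Matrix.of (D.Ric x)).trace = D.R x := rfl
  rw [W_eq, map_add, map_sub, map_smul, map_smul, hRm, ricciContraction_kulkarniNomizu_one,
    ricciContraction_kulkarniNomizu_one, htr, Matrix.trace_one, Fintype.card_fin]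
  ext j l
  simp only [Matrix.add_apply, Matrix.sub_apply, Matrix.smul_apply, smul_eq_mul,
    Matrix.one_apply, Matrix.zero_apply, Matrix.of_apply]
  split_ifs <;> field_simp <;> ring

lemma isSymm_TRic (x : M) : (Matrix.of (D.TRic x)).IsSymm := by
  refine Matrix.IsSymm.ext fun i j => ?_
  simp only [Matrix.of_apply, TRic, kdelta, eq_comm (a := i)]
  rw [show D.Ric x j i = D.Ric x i j from sum_congr rfl fun k _ => D.rm_pair x k i k j]

lemma trace_TRic (hn : n ≠ 0) (x : M) : (Matrix.of (D.TRic x)).trace = 0 := by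
  have hn' : (n : ℝ) ≠ 0 := by exact_mod_cast hn
  simp only [Matrix.trace, Matrix.diag, Matrix.of_apply, TRic, kdelta, if_true, mul_one,
    sum_sub_distrib, sum_const, card_univ, Fintype.card_fin, nsmul_eq_mul]
  change D.R x - n * (D.R x / n) = 0
  field_simp
  ring

end GeomData

end

theorem stmt12 {n : ℕ} (hn : 3 ≤ n) {M : Type} (D : GeomData n M) (lam : ℝ) :
    ∀ x, |(-(D.cWTT x) + lam * D.cTTT x)| ≤
        Real.sqrt ((((n : ℝ)) - 2) / (2 * (((n : ℝ)) - 1))) *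
          Real.sqrt (D.normSqW x + 2 * (((n : ℝ)) - 2) * lam ^ 2 / ((n : ℝ)) * D.normSqTRic x) *
          D.normSqTRic x ∧
      Real.sqrt ((((n : ℝ)) - 2) / (2 * (((n : ℝ)) - 1))) *
          Real.sqrt (D.normSqW x + 2 * (((n : ℝ)) - 2) * lam ^ 2 / ((n : ℝ)) * D.normSqTRic x) *
          D.normSqTRic x =
        Real.sqrt ((((n : ℝ)) - 2) / (2 * (((n : ℝ)) - 1))) * D.WKN lam x * D.normSqTRic x := by
  intro x
  refine ⟨?_, rfl⟩
  have h := AlgebraicCurvature.abs_neg_sum_mul_add_mul_sum_cube_le hn (D.isBiSkew_W x)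
    (D.ricciContraction_W hn x) (D.isSymm_TRic x) (D.trace_TRic (by omega) x) lam
  simpa only [AlgebraicCurvature.tensorDot_self, AlgebraicCurvature.frobeniusSq, Matrix.of_apply,
    GeomData.cWTT, GeomData.cTTT, GeomData.normSqW, GeomData.normSqTRic] using h
end

section
/- For every Riemannian manifold (M^n, g) of dimension n ≥ 3, the pointwise estimate |W_{ikpq} W_{jkpq} R̊_{ij}| ≤ √((n−1)/n) · |W|² · |R̊| holds. -/
open MeasureTheory

/-! The Gram matrix `B_{ij} = W_{ikpq} W_{jkpq}` is positive semidefinite, so `|B|² ≤ (tr B)²`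
with `tr B = |W|²`. Since `R̊` is traceless, `B · R̊ = B̊ · R̊` for the traceless part `B̊` of `B`, and
Cauchy–Schwarz together with `|B̊|² = |B|² - (tr B)²/n ≤ (n-1)/n · (tr B)²` gives the estimate. -/

open Finset

section TracelessPairing

variable {ι : Type*} [Fintype ι]

lemma sq_sum_sum_mul_le (f g : ι → ι → ℝ) :
    (∑ i, ∑ j, f i j * g i j) ^ 2 ≤ (∑ i, ∑ j, f i j ^ 2) * ∑ i, ∑ j, g i j ^ 2 := by
  simpa only [← Fintype.sum_prod_type'] using
    sum_mul_sq_le_sq_mul_sq univ (fun p : ι × ι => f p.1 p.2) (fun p => g p.1 p.2)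

lemma sum_sum_sq_gram_le {κ : Type*} [Fintype κ] (w : ι → κ → ℝ) :
    ∑ i, ∑ j, (∑ k, w i k * w j k) ^ 2 ≤ (∑ i, ∑ k, w i k ^ 2) ^ 2 :=
  calc ∑ i, ∑ j, (∑ k, w i k * w j k) ^ 2
      ≤ ∑ i, ∑ j, (∑ k, w i k ^ 2) * ∑ k, w j k ^ 2 :=
        sum_le_sum fun i _ => sum_le_sum fun j _ => sum_mul_sq_le_sq_mul_sq _ _ _
    _ = (∑ i, ∑ k, w i k ^ 2) ^ 2 := by rw [sq, sum_mul_sum]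

variable [DecidableEq ι]

lemma sum_sum_sub_diag_mul_of_trace_eq_zero (B T : ι → ι → ℝ) (c : ℝ)
    (hT : ∑ i, T i i = 0) :
    ∑ i, ∑ j, (B i j - if i = j then c else 0) * T i j = ∑ i, ∑ j, B i j * T i j := by
  simp only [sub_mul, ite_mul, zero_mul, sum_sub_distrib, sum_ite_eq, mem_univ, if_true,
    ← mul_sum, hT, mul_zero, sub_zero]

lemma sum_sum_sub_diag_sq (B : ι → ι → ℝ) (c : ℝ) :
    ∑ i, ∑ j, (B i j - if i = j then c else 0) ^ 2
      = ∑ i, ∑ j, B i j ^ 2 - 2 * c * ∑ i, B i i + Fintype.card ι * c ^ 2 := by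
  have expand : ∀ i j, (B i j - if i = j then c else 0) ^ 2
      = B i j ^ 2 - 2 * c * (if i = j then B i j else 0) + (if i = j then c ^ 2 else 0) := by
    intro i j
    split_ifs <;> ring
  simp only [expand, sum_add_distrib, sum_sub_distrib, ← mul_sum, sum_ite_eq, mem_univ,
    if_true, sum_const, card_univ, nsmul_eq_mul]

theorem abs_sum_sum_mul_le_of_trace_eq_zero (B T : ι → ι → ℝ) (hT : ∑ i, T i i = 0)
    (hB : ∑ i, ∑ j, B i j ^ 2 ≤ (∑ i, B i i) ^ 2) (htr : 0 ≤ ∑ i, B i i) :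
    |∑ i, ∑ j, B i j * T i j| ≤
      √((Fintype.card ι - 1) / Fintype.card ι) * (∑ i, B i i) * √(∑ i, ∑ j, T i j ^ 2) := by
  set b := ∑ i, B i i
  set N : ℝ := (Fintype.card ι : ℝ)
  rcases isEmpty_or_nonempty ι with _ | _
  · simp
  have hN : 1 ≤ N := Nat.one_le_cast.mpr Fintype.card_pos
  have hB₀ : ∑ i, ∑ j, (B i j - if i = j then b / N else 0) ^ 2 ≤ (N - 1) / N * b ^ 2 :=
    calc _ = ∑ i, ∑ j, B i j ^ 2 - b ^ 2 / N := by
          rw [sum_sum_sub_diag_sq]; field_simp; ring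
      _ ≤ b ^ 2 - b ^ 2 / N := by linarith
      _ = (N - 1) / N * b ^ 2 := by field_simp
  rw [← sum_sum_sub_diag_mul_of_trace_eq_zero B T (b / N) hT]
  calc _ ≤ √((N - 1) / N * b ^ 2 * ∑ i, ∑ j, T i j ^ 2) :=
        Real.abs_le_sqrt <| (sq_sum_sum_mul_le _ _).trans <|
          mul_le_mul_of_nonneg_right hB₀ (by positivity)
    _ = √((N - 1) / N) * b * √(∑ i, ∑ j, T i j ^ 2) := by
        rw [Real.sqrt_mul (by positivity), Real.sqrt_mul (div_nonneg (by linarith) (by linarith)),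
          Real.sqrt_sq htr]

end TracelessPairing

namespace GeomData

variable {n : ℕ} {M : Type} (D : GeomData n M)

lemma sum_TRic_self (x : M) : ∑ i, D.TRic x i i = 0 := by
  rcases Nat.eq_zero_or_pos n with rfl | hn
  · simp
  simp only [TRic, kdelta, if_true, mul_one, sum_sub_distrib, sum_const, card_univ,
    Fintype.card_fin, nsmul_eq_mul]
  field_simp
  exact sub_self _

lemma cWWT_eq_sum_gram_mul (x : M) :
    D.cWWT x = ∑ i, ∑ j, (∑ p : Fin n × Fin n × Fin n,
      D.W x i p.1 p.2.1 p.2.2 * D.W x j p.1 p.2.1 p.2.2) * D.TRic x i j := by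
  simp only [cWWT, Fintype.sum_prod_type, sum_mul]

lemma normSqW_eq_sum (x : M) :
    D.normSqW x = ∑ i, ∑ p : Fin n × Fin n × Fin n, D.W x i p.1 p.2.1 p.2.2 ^ 2 := by
  simp only [normSqW, Fintype.sum_prod_type]

end GeomData

theorem stmt13_general {n : ℕ} {M : Type} (D : GeomData n M) :
    ∀ x, |D.cWWT x| ≤ Real.sqrt ((((n : ℝ)) - 1) / ((n : ℝ))) * D.normSqW x * D.normTRic x := by
  intro x
  set w : Fin n → Fin n × Fin n × Fin n → ℝ := fun i p => D.W x i p.1 p.2.1 p.2.2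
  have hgram : ∀ i, ∑ p, w i p * w i p = ∑ p, w i p ^ 2 := fun i => by simp only [sq]
  have key := abs_sum_sum_mul_le_of_trace_eq_zero (fun i j => ∑ p, w i p * w j p)
    (D.TRic x) (D.sum_TRic_self x) (by simpa only [hgram] using sum_sum_sq_gram_le w)
    (sum_nonneg fun i _ => sum_nonneg fun p _ => mul_self_nonneg (w i p))
  simp only [hgram, Fintype.card_fin] at key
  rwa [D.cWWT_eq_sum_gram_mul, D.normSqW_eq_sum]

theorem stmt13 {n : ℕ} (hn : 3 ≤ n) {M : Type} (D : GeomData n M) :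
    ∀ x, |D.cWWT x| ≤ Real.sqrt ((((n : ℝ)) - 1) / ((n : ℝ))) * D.normSqW x * D.normTRic x :=
  stmt13_general D
end

section
/- Let M^n be a closed manifold of dimension n ≥ 3 and let g be a critical metric for F_{t,s} on M₁(M^n). Then the traceless Ricci tensor satisfies the identity (1+4s)ΔR̊_{ij} = (1+2t+2s)(R_{,ij} − (1/n)(ΔR)g_{ij}) − ((2(n−2)+4ns)/(n−2)) W_{ikjl} R̊_{kl} − 2s W_{ikpq} W_{jkpq} + [ −((4s(n²−3n+4)+4(n−2))/(n(n−2)²)) |R̊|² + (2s/n) |W|² ] g_{ij} + ((4s(n²−3n+4)+4(n−2))/(n−2)²) R̊_{ik} R̊_{jk} + ((4−2n−2n(n−1)t+4(n−2)s)/(n(n−1))) R R̊_{ij}. -/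
open MeasureTheory

/-!
Write `Rm = W + P ⊙ g`, with `P` the Schouten tensor and `⊙` the Kulkarni–Nomizu product. The
identity `Ric = (n - 2) P + (tr P) g` makes `W` totally trace-free, so contracting `W` against
`P ⊙ g` only sees `W_{ikjl} P_{kl}`, while contractions of `P ⊙ g` with itself reduce to `P²`,
`tr P` and `|P|²`. Hence `R_{ikjl} R̊_{kl}`, `R_{ikpq} R_{jkpq}` and `|Rm|²` are Weyl terms plus
explicit polynomials in `R̊` and `R`, and substituting them into the Euler–Lagrange equation is
field arithmetic.
-/

lemma cast_sub_ne_zero_of_three_le {n : ℕ} (hn : 3 ≤ n) :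
    (n : ℝ) ≠ 0 ∧ (n : ℝ) - 1 ≠ 0 ∧ (n : ℝ) - 2 ≠ 0 := by
  have : (3 : ℝ) ≤ n := by exact_mod_cast hn
  exact ⟨by linarith, by linarith, by linarith⟩

section KulkarniNomizu

variable {n : ℕ}

lemma kdelta_comm (i j : Fin n) : kdelta i j = kdelta j i := by
  simp only [kdelta, eq_comm]

lemma sum_kdelta_self : ∑ i : Fin n, kdelta i i = n := by
  simp [kdelta]

lemma sum_kdelta_mul (f : Fin n → ℝ) (i : Fin n) : ∑ k, kdelta i k * f k = f i := by
  simp [kdelta]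

def kulkarniNomizu (h k : Fin n → Fin n → ℝ) (a b c d : Fin n) : ℝ :=
  h a c * k b d + h b d * k a c - h a d * k b c - h b c * k a d

lemma kulkarniNomizu_antisymm (h k : Fin n → Fin n → ℝ) (a b c d : Fin n) :
    kulkarniNomizu h k a b d c = -kulkarniNomizu h k a b c d := by
  unfold kulkarniNomizu; ring

lemma sum_kulkarniNomizu_kdelta_trace (h : Fin n → Fin n → ℝ) (a c : Fin n) :
    ∑ k, kulkarniNomizu h kdelta a k c k = (n - 2) * h a c + (∑ k, h k k) * kdelta a c := by
  simp only [kulkarniNomizu, Finset.sum_add_distrib, Finset.sum_sub_distrib, ← Finset.mul_sum,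
    ← Finset.sum_mul, sum_kdelta_self]
  simp only [kdelta, mul_ite, mul_one, mul_zero, Finset.sum_ite_eq', Finset.mem_univ, ↓reduceIte,
    Finset.sum_ite_eq]
  ring

lemma sum_kulkarniNomizu_kdelta_mul (h h' : Fin n → Fin n → ℝ) (i j : Fin n) :
    ∑ k, ∑ l, kulkarniNomizu h kdelta i k j l * h' k l
      = h i j * ∑ k, h' k k + (∑ k, ∑ l, h k l * h' k l) * kdelta i j
        - ∑ k, h i k * h' j k - ∑ k, h k j * h' k i := by
  simp [kulkarniNomizu, kdelta, add_mul, sub_mul, Finset.sum_add_distrib, Finset.sum_sub_distrib,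
    Finset.mul_sum]

lemma sum_mul_kulkarniNomizu_kdelta (T : Fin n → Fin n → Fin n → ℝ)
    (hT : ∀ k p q, T k q p = -T k p q) (h : Fin n → Fin n → ℝ) (j : Fin n) :
    ∑ k, ∑ p, ∑ q, T k p q * kulkarniNomizu h kdelta j k p q
      = 2 * ∑ k, ∑ p, T k p k * h j p + 2 * ∑ k, ∑ l, T k j l * h k l := by
  have hT₁ : ∀ k p, T k k p = -T k p k := fun k p => hT k p k
  have hT₂ : ∀ k p, T k p j = -T k j p := fun k p => hT k j p
  simp only [kulkarniNomizu, kdelta, mul_ite, mul_one, mul_zero, mul_sub, mul_add,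
    Finset.sum_sub_distrib, Finset.sum_add_distrib, Finset.sum_ite_eq, Finset.mem_univ,
    ↓reduceIte, Finset.sum_ite_irrel, Finset.sum_const_zero, hT₂, neg_mul, sub_neg_eq_add, hT₁,
    Finset.sum_neg_distrib, Finset.mul_sum, two_mul]
  ring

lemma sum_kulkarniNomizu_kdelta_mul_self (h : Fin n → Fin n → ℝ)
    (hh : ∀ a b, h b a = h a b) (i j : Fin n) :
    ∑ k, ∑ p, ∑ q, kulkarniNomizu h kdelta i k p q * kulkarniNomizu h kdelta j k p q
      = 2 * ((n - 4) * ∑ k, h i k * h j k + 2 * (∑ k, h k k) * h i j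
        + (∑ k, ∑ l, h k l * h k l) * kdelta i j) := by
  rw [sum_mul_kulkarniNomizu_kdelta _ (fun k p q => kulkarniNomizu_antisymm h kdelta i k p q),
    Finset.sum_comm, sum_kulkarniNomizu_kdelta_mul]
  simp only [← Finset.sum_mul, sum_kulkarniNomizu_kdelta_trace, add_mul, Finset.sum_add_distrib]
  have hsq : ∑ k, h k j * h k i = ∑ k, h i k * h j k :=
    Finset.sum_congr rfl fun k _ => by rw [hh k j, hh k i, mul_comm]
  rw [hsq]
  simp only [mul_assoc, ← Finset.mul_sum]
  simp only [kdelta, ite_mul, one_mul, zero_mul, Finset.sum_ite_eq, Finset.mem_univ, ↓reduceIte,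
    hh j i, mul_ite, mul_one, mul_zero]
  ring

end KulkarniNomizu

namespace GeomData

variable {n : ℕ} {M : Type} (D : GeomData n M) (x : M)

lemma ric_symm (j k : Fin n) : D.Ric x k j = D.Ric x j k :=
  Finset.sum_congr rfl fun i _ => D.rm_pair x i j i k

lemma tric_symm (j k : Fin n) : D.TRic x k j = D.TRic x j k := by
  rw [TRic, TRic, D.ric_symm, kdelta_comm]

lemma sum_ric_self : ∑ k, D.Ric x k k = D.R x := rfl

lemma sum_tric_self (hn : (n : ℝ) ≠ 0) : ∑ k, D.TRic x k k = 0 := by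
  simp only [TRic, Finset.sum_sub_distrib, ← Finset.mul_sum, sum_kdelta_self, D.sum_ric_self]
  field_simp
  ring

lemma sum_rm_trace (a c : Fin n) : ∑ k, D.Rm x a k c k = D.Ric x a c :=
  Finset.sum_congr rfl fun k _ => by rw [D.rm_antisymm₁, D.rm_antisymm₂, neg_neg]

lemma weyl_antisymm₁ (i j k l : Fin n) : D.W x j i k l = -D.W x i j k l := by
  unfold W; rw [D.rm_antisymm₁]; ring

lemma weyl_antisymm₂ (i j k l : Fin n) : D.W x i j l k = -D.W x i j k l := by
  unfold W; rw [D.rm_antisymm₂]; ring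

lemma weyl_pair (i j k l : Fin n) : D.W x k l i j = D.W x i j k l := by
  unfold W
  rw [D.rm_pair, D.ric_symm x i k, D.ric_symm x j k, D.ric_symm x i l, D.ric_symm x j l,
    kdelta_comm k i, kdelta_comm k j, kdelta_comm l i, kdelta_comm l j]
  ring

noncomputable def schouten (x : M) (i j : Fin n) : ℝ :=
  (D.Ric x i j - D.R x / (2 * ((n : ℝ) - 1)) * kdelta i j) / ((n : ℝ) - 2)

lemma schouten_symm (i j : Fin n) : D.schouten x j i = D.schouten x i j := by
  rw [schouten, schouten, D.ric_symm, kdelta_comm]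

lemma rm_eq_weyl_add_kulkarniNomizu (a b c d : Fin n) :
    D.Rm x a b c d = D.W x a b c d + kulkarniNomizu (D.schouten x) kdelta a b c d := by
  simp only [W, kulkarniNomizu, schouten, div_eq_mul_inv, mul_inv]
  ring

lemma schouten_eq (hn : 3 ≤ n) (i j : Fin n) :
    D.schouten x i j
      = D.TRic x i j / ((n : ℝ) - 2) + D.R x / (2 * n * ((n : ℝ) - 1)) * kdelta i j := by
  obtain ⟨hn0, hn1, hn2⟩ := cast_sub_ne_zero_of_three_le hn
  unfold schouten TRic
  field_simp
  ring

lemma sum_schouten_self (hn : 3 ≤ n) :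
    ∑ k, D.schouten x k k = D.R x / (2 * ((n : ℝ) - 1)) := by
  obtain ⟨hn0, hn1, hn2⟩ := cast_sub_ne_zero_of_three_le hn
  simp only [schouten, ← Finset.sum_div, Finset.sum_sub_distrib, ← Finset.mul_sum,
    sum_kdelta_self, D.sum_ric_self]
  field_simp
  ring

lemma sum_weyl_trace (hn : 3 ≤ n) (a c : Fin n) : ∑ k, D.W x a k c k = 0 := by
  obtain ⟨hn0, hn1, hn2⟩ := cast_sub_ne_zero_of_three_le hn
  have hW : ∀ k, D.W x a k c k = D.Rm x a k c k - kulkarniNomizu (D.schouten x) kdelta a k c k :=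
    fun k => by rw [D.rm_eq_weyl_add_kulkarniNomizu]; ring
  simp only [hW, Finset.sum_sub_distrib, D.sum_rm_trace, sum_kulkarniNomizu_kdelta_trace,
    D.sum_schouten_self x hn]
  unfold schouten
  field_simp
  ring

lemma sum_weyl_trace_left (hn : 3 ≤ n) (a c : Fin n) : ∑ k, D.W x k a k c = 0 := by
  simp only [← D.sum_weyl_trace x hn a c]
  exact Finset.sum_congr rfl fun k _ => by rw [D.weyl_antisymm₁, D.weyl_antisymm₂, neg_neg]

lemma sum_weyl_mul_comm (h : Fin n → Fin n → ℝ) (hh : ∀ a b, h b a = h a b) (i j : Fin n) :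
    ∑ k, ∑ l, D.W x j k i l * h k l = ∑ k, ∑ l, D.W x i k j l * h k l := by
  rw [Finset.sum_comm]
  exact Finset.sum_congr rfl fun a _ => Finset.sum_congr rfl fun b _ => by
    rw [D.weyl_pair x i a j b, hh]

lemma sum_weyl_mul_kulkarniNomizu (hn : 3 ≤ n) (h : Fin n → Fin n → ℝ) (i j : Fin n) :
    ∑ k, ∑ p, ∑ q, D.W x i k p q * kulkarniNomizu h kdelta j k p q
      = 2 * ∑ k, ∑ l, D.W x i k j l * h k l := by
  rw [sum_mul_kulkarniNomizu_kdelta _ (D.weyl_antisymm₂ x i), Finset.sum_comm]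
  simp only [← Finset.sum_mul, D.sum_weyl_trace x hn, zero_mul, Finset.sum_const_zero, mul_zero,
    zero_add]

lemma sum_rm_mul_rm_eq_schouten (hn : 3 ≤ n) (i j : Fin n) :
    ∑ k, ∑ p, ∑ q, D.Rm x i k p q * D.Rm x j k p q
      = ∑ k, ∑ p, ∑ q, D.W x i k p q * D.W x j k p q
        + 4 * ∑ k, ∑ l, D.W x i k j l * D.schouten x k l
        + 2 * ((n - 4) * ∑ k, D.schouten x i k * D.schouten x j k
          + 2 * (∑ k, D.schouten x k k) * D.schouten x i j
          + (∑ k, ∑ l, D.schouten x k l * D.schouten x k l) * kdelta i j) := by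
  have hKW : ∑ k, ∑ p, ∑ q, kulkarniNomizu (D.schouten x) kdelta i k p q * D.W x j k p q
      = 2 * ∑ k, ∑ l, D.W x i k j l * D.schouten x k l := by
    simp only [mul_comm (kulkarniNomizu _ _ _ _ _ _)]
    rw [D.sum_weyl_mul_kulkarniNomizu x hn, D.sum_weyl_mul_comm x _ (D.schouten_symm x)]
  simp only [D.rm_eq_weyl_add_kulkarniNomizu x, add_mul, mul_add, Finset.sum_add_distrib]
  rw [D.sum_weyl_mul_kulkarniNomizu x hn, hKW,
    sum_kulkarniNomizu_kdelta_mul_self _ (D.schouten_symm x)]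
  ring

lemma sum_schouten_mul (hn : 3 ≤ n) (f : Fin n → ℝ) (i : Fin n) :
    ∑ k, D.schouten x i k * f k
      = (∑ k, D.TRic x i k * f k) / ((n : ℝ) - 2)
        + D.R x / (2 * n * ((n : ℝ) - 1)) * f i := by
  simp only [D.schouten_eq x hn, add_mul, Finset.sum_add_distrib, div_mul_eq_mul_div,
    ← Finset.sum_div, mul_assoc, ← Finset.mul_sum, sum_kdelta_mul]

lemma sum_weyl_mul_schouten (hn : 3 ≤ n) (i j : Fin n) :
    ∑ k, ∑ l, D.W x i k j l * D.schouten x k l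
      = (∑ k, ∑ l, D.W x i k j l * D.TRic x k l) / ((n : ℝ) - 2) := by
  simp only [mul_comm (D.W x _ _ _ _), D.sum_schouten_mul x hn, Finset.sum_add_distrib,
    ← Finset.sum_div, ← Finset.mul_sum, D.sum_weyl_trace x hn, mul_zero, add_zero]

lemma sum_schouten_mul_schouten (hn : 3 ≤ n) (i j : Fin n) :
    ∑ k, D.schouten x i k * D.schouten x j k
      = (∑ k, D.TRic x i k * D.TRic x j k) / ((n : ℝ) - 2) ^ 2
        + D.R x / (n * ((n : ℝ) - 1) * ((n : ℝ) - 2)) * D.TRic x i j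
        + (D.R x / (2 * n * ((n : ℝ) - 1))) ^ 2 * kdelta i j := by
  obtain ⟨hn0, hn1, hn2⟩ := cast_sub_ne_zero_of_three_le hn
  rw [D.sum_schouten_mul x hn]
  simp only [mul_comm (D.TRic x i _)]
  rw [D.sum_schouten_mul x hn, D.schouten_eq x hn, D.tric_symm, kdelta_comm]
  simp only [mul_comm (D.TRic x j _)]
  field_simp
  ring

lemma sum_schouten_sq (hn : 3 ≤ n) :
    ∑ k, ∑ l, D.schouten x k l * D.schouten x k l
      = D.normSqTRic x / ((n : ℝ) - 2) ^ 2 + D.R x ^ 2 / (4 * n * ((n : ℝ) - 1) ^ 2) := by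
  obtain ⟨hn0, hn1, hn2⟩ := cast_sub_ne_zero_of_three_le hn
  simp only [D.sum_schouten_mul_schouten x hn, Finset.sum_add_distrib, ← Finset.sum_div,
    ← Finset.mul_sum, D.sum_tric_self x hn0, sum_kdelta_self, normSqTRic, sq]
  field_simp
  ring

lemma sum_rm_mul_tric (hn : 3 ≤ n) (i j : Fin n) :
    ∑ k, ∑ l, D.Rm x i k j l * D.TRic x k l
      = ∑ k, ∑ l, D.W x i k j l * D.TRic x k l
        - 2 / ((n : ℝ) - 2) * ∑ k, D.TRic x i k * D.TRic x j k
        + 1 / ((n : ℝ) - 2) * D.normSqTRic x * kdelta i j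
        - 1 / (n * ((n : ℝ) - 1)) * D.R x * D.TRic x i j := by
  obtain ⟨hn0, hn1, hn2⟩ := cast_sub_ne_zero_of_three_le hn
  have hswap : ∑ k, D.schouten x k j * D.TRic x k i = ∑ k, D.schouten x j k * D.TRic x i k :=
    Finset.sum_congr rfl fun k _ => by rw [D.schouten_symm, D.tric_symm]
  simp only [D.rm_eq_weyl_add_kulkarniNomizu x, add_mul, Finset.sum_add_distrib]
  rw [sum_kulkarniNomizu_kdelta_mul, hswap]
  simp only [D.sum_schouten_mul x hn, Finset.sum_add_distrib, ← Finset.sum_div,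
    ← Finset.mul_sum, D.sum_tric_self x hn0, D.tric_symm x i j, normSqTRic, sq,
    mul_comm (D.TRic x j _)]
  field_simp
  ring

lemma sum_rm_mul_rm (hn : 3 ≤ n) (i j : Fin n) :
    ∑ k, ∑ p, ∑ q, D.Rm x i k p q * D.Rm x j k p q
      = ∑ k, ∑ p, ∑ q, D.W x i k p q * D.W x j k p q
        + 4 / ((n : ℝ) - 2) * ∑ k, ∑ l, D.W x i k j l * D.TRic x k l
        + 2 * ((n : ℝ) - 4) / ((n : ℝ) - 2) ^ 2 * ∑ k, D.TRic x i k * D.TRic x j k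
        + 2 / ((n : ℝ) - 2) ^ 2 * D.normSqTRic x * kdelta i j
        + 4 / (n * ((n : ℝ) - 1)) * D.R x * D.TRic x i j
        + 2 / ((n : ℝ) ^ 2 * ((n : ℝ) - 1)) * D.R x ^ 2 * kdelta i j := by
  obtain ⟨hn0, hn1, hn2⟩ := cast_sub_ne_zero_of_three_le hn
  rw [D.sum_rm_mul_rm_eq_schouten x hn, D.sum_weyl_mul_schouten x hn,
    D.sum_schouten_mul_schouten x hn, D.sum_schouten_self x hn, D.sum_schouten_sq x hn,
    D.schouten_eq x hn]
  field_simp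
  ring

lemma normSqRm_eq (hn : 3 ≤ n) :
    D.normSqRm x = D.normSqW x + 4 / ((n : ℝ) - 2) * D.normSqTRic x
      + 2 / (n * ((n : ℝ) - 1)) * D.R x ^ 2 := by
  obtain ⟨hn0, hn1, hn2⟩ := cast_sub_ne_zero_of_three_le hn
  have hWT : ∑ i, ∑ k, ∑ l, D.W x i k i l * D.TRic x k l = 0 := by
    rw [Finset.sum_comm]
    refine Finset.sum_eq_zero fun k _ => ?_
    rw [Finset.sum_comm]
    simp only [← Finset.sum_mul, D.sum_weyl_trace_left x hn, zero_mul, Finset.sum_const_zero]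
  simp only [normSqRm, normSqW, normSqTRic, sq, D.sum_rm_mul_rm x hn, Finset.sum_add_distrib,
    ← Finset.mul_sum, hWT, D.sum_tric_self x hn0, sum_kdelta_self]
  field_simp
  ring

end GeomData

theorem stmt19_general {n : ℕ} (hn : 3 ≤ n) {M : Type} [MeasurableSpace M]
    (μ : MeasureTheory.Measure M)
    (D : GeomData n M) (t s : ℝ)
    (hcrit : D.IsCritical μ t s) :
    ∀ x i j, (1 + 4 * s) * D.lapTRic x i j =
      (1 + 2 * t + 2 * s) * (D.hessR x i j - 1 / ((n : ℝ)) * D.lapR x * kdelta i j)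
      - (2 * (((n : ℝ)) - 2) + 4 * ((n : ℝ)) * s) / (((n : ℝ)) - 2) *
          (∑ k : Fin n, ∑ l : Fin n, D.W x i k j l * D.TRic x k l)
      - 2 * s * (∑ k : Fin n, ∑ p : Fin n, ∑ q : Fin n, D.W x i k p q * D.W x j k p q)
      + (-((4 * s * (((n : ℝ)) ^ 2 - 3 * ((n : ℝ)) + 4) + 4 * (((n : ℝ)) - 2)) / (((n : ℝ)) * (((n : ℝ)) - 2) ^ 2))
            * D.normSqTRic x
          + 2 * s / ((n : ℝ)) * D.normSqW x) * kdelta i j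
      + (4 * s * (((n : ℝ)) ^ 2 - 3 * ((n : ℝ)) + 4) + 4 * (((n : ℝ)) - 2)) / (((n : ℝ)) - 2) ^ 2 *
          (∑ k : Fin n, D.TRic x i k * D.TRic x j k)
      + (4 - 2 * ((n : ℝ)) - 2 * ((n : ℝ)) * (((n : ℝ)) - 1) * t + 4 * (((n : ℝ)) - 2) * s) / (((n : ℝ)) * (((n : ℝ)) - 1))
          * D.R x * D.TRic x i j := by
  intro x i j
  obtain ⟨hn0, hn1, hn2⟩ := cast_sub_ne_zero_of_three_le hn
  rw [hcrit.1 x i j, D.sum_rm_mul_tric x hn, D.sum_rm_mul_rm x hn, D.normSqRm_eq x hn]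
  field_simp
  ring

theorem stmt19 {n : ℕ} (hn : 3 ≤ n) {M : Type} [TopologicalSpace M] [MeasurableSpace M]
    [CompactSpace M] (μ : MeasureTheory.Measure M) [MeasureTheory.IsProbabilityMeasure μ]
    (D : GeomData n M) (t s : ℝ)
    (hcrit : D.IsCritical μ t s) :
    ∀ x i j, (1 + 4 * s) * D.lapTRic x i j =
      (1 + 2 * t + 2 * s) * (D.hessR x i j - 1 / ((n : ℝ)) * D.lapR x * kdelta i j)
      - (2 * (((n : ℝ)) - 2) + 4 * ((n : ℝ)) * s) / (((n : ℝ)) - 2) *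
          (∑ k : Fin n, ∑ l : Fin n, D.W x i k j l * D.TRic x k l)
      - 2 * s * (∑ k : Fin n, ∑ p : Fin n, ∑ q : Fin n, D.W x i k p q * D.W x j k p q)
      + (-((4 * s * (((n : ℝ)) ^ 2 - 3 * ((n : ℝ)) + 4) + 4 * (((n : ℝ)) - 2)) / (((n : ℝ)) * (((n : ℝ)) - 2) ^ 2))
            * D.normSqTRic x
          + 2 * s / ((n : ℝ)) * D.normSqW x) * kdelta i j
      + (4 * s * (((n : ℝ)) ^ 2 - 3 * ((n : ℝ)) + 4) + 4 * (((n : ℝ)) - 2)) / (((n : ℝ)) - 2) ^ 2 *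
          (∑ k : Fin n, D.TRic x i k * D.TRic x j k)
      + (4 - 2 * ((n : ℝ)) - 2 * ((n : ℝ)) * (((n : ℝ)) - 1) * t + 4 * (((n : ℝ)) - 2) * s) / (((n : ℝ)) * (((n : ℝ)) - 1))
          * D.R x * D.TRic x i j :=
  stmt19_general hn μ D t s hcrit
end
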